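/- arXiv:1810.01436 — 5 statements merged into one kernel-verified Lean document; each statement's English description precedes it below -/
import Mathlib

section
/- If for each player i in a finite set I, the function u_i : R^T → R is concave, and c : R^T → R^T with c(X) = (c_t(X_t))_t where each c_t : R → R is non-decreasing, then the map H' sending a profile (x_i)_{i∈I} ∈ ∏_i X_i (each X_i ⊂ R^T convex compact) to the set ∏_i { c(Σ_j x_j) + g_i : g_i ∈ ∂(-u_i)(x_i) } is a monotone set-valued map, i.e., for all profiles x, y and all selections g ∈ H'(x), h ∈ H'(y), one has Σ_i ⟨g_i − h_i, x_i − y_i⟩ ≥ 0. -/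
/-!
Each coordinate of `H'` splits into the common congestion term `c(Σ_j x_j)` and a subgradient
of `-u_i`. Summed over players, the congestion terms pair with `Σ_j x_j - Σ_j y_j` and are
nonnegative because each `c_t` is non-decreasing; the subgradient terms are nonnegative player
by player, since adding the subgradient inequalities at `x_i` and at `y_i` gives
`⟪g_i - h_i, x_i - y_i⟫ ≥ 0`.
-/

open scoped RealInnerProductSpace BigOperators

noncomputable section

/-- Componentwise cost vector. -/
def cvec {T : ℕ} (c : Fin T → ℝ → ℝ) (X : EuclideanSpace ℝ (Fin T)) :
    EuclideanSpace ℝ (Fin T) :=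
  WithLp.toLp 2 (fun t => c t (X t))

/-- Convex subdifferential of `f : E → ℝ` at `x`. -/
def subdiff {T : ℕ} (f : EuclideanSpace ℝ (Fin T) → ℝ) (x : EuclideanSpace ℝ (Fin T)) :
    Set (EuclideanSpace ℝ (Fin T)) :=
  {g | ∀ y, f x + ⟪g, y - x⟫ ≤ f y}

theorem inner_sub_nonneg_of_mem_subdiff {T : ℕ} {f : EuclideanSpace ℝ (Fin T) → ℝ}
    {x y g h : EuclideanSpace ℝ (Fin T)} (hg : g ∈ subdiff f x) (hh : h ∈ subdiff f y) :
    0 ≤ ⟪g - h, x - y⟫ := by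
  have hgy := hg y
  have hhx := hh x
  rw [← neg_sub x y, inner_neg_right] at hgy
  rw [inner_sub_left]
  linarith

theorem inner_cvec_sub_nonneg {T : ℕ} {c : Fin T → ℝ → ℝ} (hc : ∀ t, Monotone (c t))
    (a b : EuclideanSpace ℝ (Fin T)) : 0 ≤ ⟪cvec c a - cvec c b, a - b⟫ := by
  simp only [PiLp.inner_apply, RCLike.inner_apply, conj_trivial, cvec, PiLp.sub_apply]
  refine Finset.sum_nonneg fun t _ => ?_
  rcases le_total (b t) (a t) with hba | hab
  · exact mul_nonneg (sub_nonneg.2 hba) (sub_nonneg.2 (hc t hba))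
  · exact mul_nonneg_of_nonpos_of_nonpos (sub_nonpos.2 hab) (sub_nonpos.2 (hc t hab))

theorem monotonicity_of_H'_general {I T : ℕ}
    (u : Fin I → EuclideanSpace ℝ (Fin T) → ℝ)
    (c : Fin T → ℝ → ℝ) (hc : ∀ t, Monotone (c t))
    (x y : Fin I → EuclideanSpace ℝ (Fin T))
    (g h : Fin I → EuclideanSpace ℝ (Fin T))
    (hg : ∀ i, ∃ gi ∈ subdiff (fun z => - u i z) (x i),
      g i = cvec c (∑ j, x j) + gi)
    (hh : ∀ i, ∃ hi ∈ subdiff (fun z => - u i z) (y i),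
      h i = cvec c (∑ j, y j) + hi) :
    0 ≤ ∑ i, ⟪g i - h i, x i - y i⟫ := by
  choose g' hg' hg_eq using hg
  choose h' hh' hh_eq using hh
  have hsplit : ∑ i, ⟪g i - h i, x i - y i⟫ =
      ⟪cvec c (∑ j, x j) - cvec c (∑ j, y j), ∑ j, x j - ∑ j, y j⟫ +
        ∑ i, ⟪g' i - h' i, x i - y i⟫ := by
    rw [← Finset.sum_sub_distrib, inner_sum, ← Finset.sum_add_distrib]
    refine Finset.sum_congr rfl fun i _ => ?_
    rw [hg_eq, hh_eq, add_sub_add_comm, inner_add_left]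
  rw [hsplit]
  exact add_nonneg (inner_cvec_sub_nonneg hc _ _)
    (Finset.sum_nonneg fun i _ => inner_sub_nonneg_of_mem_subdiff (hg' i) (hh' i))

theorem monotonicity_of_H' {I T : ℕ}
    (X : Fin I → Set (EuclideanSpace ℝ (Fin T)))
    (hXconv : ∀ i, Convex ℝ (X i)) (hXcpt : ∀ i, IsCompact (X i))
    (u : Fin I → EuclideanSpace ℝ (Fin T) → ℝ)
    (hu : ∀ i, ConcaveOn ℝ Set.univ (u i))
    (hucont : ∀ i, Continuous (u i))
    (c : Fin T → ℝ → ℝ) (hc : ∀ t, Monotone (c t))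
    (x y : Fin I → EuclideanSpace ℝ (Fin T))
    (hx : ∀ i, x i ∈ X i) (hy : ∀ i, y i ∈ X i)
    (g h : Fin I → EuclideanSpace ℝ (Fin T))
    (hg : ∀ i, ∃ gi ∈ subdiff (fun z => - u i z) (x i),
      g i = cvec c (∑ j, x j) + gi)
    (hh : ∀ i, ∃ hi ∈ subdiff (fun z => - u i z) (y i),
      h i = cvec c (∑ j, y j) + hi) :
    0 ≤ ∑ i, ⟪g i - h i, x i - y i⟫ :=
  monotonicity_of_H'_general u c hc x y g h hg hh
end
end

section
/- Let Γ be a set-valued map on ∏_i X_i that is aggregatively strictly monotone: for all x, y and all selections g ∈ Γ(x), h ∈ Γ(y), Σ_i ⟨g_i − h_i, x_i − y_i⟩ ≥ 0, with equality only if Σ_i x_i = Σ_i y_i. Then any two solutions x̂, ŷ of the generalized variational inequality on a set K ⊂ ∏_i X_i have the same aggregate: Σ_i x̂_i = Σ_i ŷ_i. -/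
open scoped RealInnerProductSpace

section

variable {ι E : Type*} [Fintype ι] [NormedAddCommGroup E] [InnerProductSpace ℝ E]

theorem sum_inner_sub_sub_eq (g h x y : ι → E) :
    ∑ i, ⟪g i - h i, x i - y i⟫ = -(∑ i, ⟪g i, y i - x i⟫) - ∑ i, ⟪h i, x i - y i⟫ := by
  rw [← Finset.sum_neg_distrib, ← Finset.sum_sub_distrib]
  refine Finset.sum_congr rfl fun i _ => ?_
  simp only [inner_sub_left, inner_sub_right]
  ring

theorem sum_inner_sub_sub_nonpos {g h x y : ι → E}
    (hgy : 0 ≤ ∑ i, ⟪g i, y i - x i⟫) (hhx : 0 ≤ ∑ i, ⟪h i, x i - y i⟫) :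
    ∑ i, ⟪g i - h i, x i - y i⟫ ≤ 0 := by
  rw [sum_inner_sub_sub_eq]
  linarith

end

theorem gvi_same_aggregate_of_agg_strictly_monotone_general {I T : ℕ}
    (X : Fin I → Set (EuclideanSpace ℝ (Fin T)))
    (Γ : (Fin I → EuclideanSpace ℝ (Fin T)) → Set (Fin I → EuclideanSpace ℝ (Fin T)))
    (K : Set (Fin I → EuclideanSpace ℝ (Fin T)))
    (hK : K ⊆ {x | ∀ i, x i ∈ X i})
    (hmono : ∀ x y, (∀ i, x i ∈ X i) → (∀ i, y i ∈ X i) →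
      ∀ g ∈ Γ x, ∀ h ∈ Γ y,
        0 ≤ ∑ i, ⟪g i - h i, x i - y i⟫ ∧
        ((∑ i, ⟪g i - h i, x i - y i⟫) = 0 → (∑ i, x i) = ∑ i, y i))
    (x y : Fin I → EuclideanSpace ℝ (Fin T)) (hx : x ∈ K) (hy : y ∈ K)
    (hgx : ∃ g ∈ Γ x, ∀ z ∈ K, 0 ≤ ∑ i, ⟪g i, z i - x i⟫)
    (hgy : ∃ h ∈ Γ y, ∀ z ∈ K, 0 ≤ ∑ i, ⟪h i, z i - y i⟫) :
    (∑ i, x i) = ∑ i, y i := by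
  obtain ⟨g, hg, hg_sol⟩ := hgx
  obtain ⟨h, hh, hh_sol⟩ := hgy
  obtain ⟨hmono_nonneg, hmono_strict⟩ := hmono x y (hK hx) (hK hy) g hg h hh
  exact hmono_strict <|
    le_antisymm (sum_inner_sub_sub_nonpos (hg_sol y hy) (hh_sol x hx)) hmono_nonneg

/-- For an aggregatively strictly monotone set-valued map, any two GVI solutions
have the same aggregate. -/
theorem gvi_same_aggregate_of_agg_strictly_monotone {I T : ℕ}
    (X : Fin I → Set (EuclideanSpace ℝ (Fin T)))
    (hXconv : ∀ i, Convex ℝ (X i))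
    (Γ : (Fin I → EuclideanSpace ℝ (Fin T)) → Set (Fin I → EuclideanSpace ℝ (Fin T)))
    (K : Set (Fin I → EuclideanSpace ℝ (Fin T)))
    (hK : K ⊆ {x | ∀ i, x i ∈ X i})
    (hΓne : ∀ x ∈ K, (Γ x).Nonempty)
    (hmono : ∀ x y, (∀ i, x i ∈ X i) → (∀ i, y i ∈ X i) →
      ∀ g ∈ Γ x, ∀ h ∈ Γ y,
        0 ≤ ∑ i, ⟪g i - h i, x i - y i⟫ ∧
        ((∑ i, ⟪g i - h i, x i - y i⟫) = 0 → (∑ i, x i) = ∑ i, y i))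
    (x y : Fin I → EuclideanSpace ℝ (Fin T)) (hx : x ∈ K) (hy : y ∈ K)
    (hgx : ∃ g ∈ Γ x, ∀ z ∈ K, 0 ≤ ∑ i, ⟪g i, z i - x i⟫)
    (hgy : ∃ h ∈ Γ y, ∀ z ∈ K, 0 ≤ ∑ i, ⟪h i, z i - y i⟫) :
    (∑ i, x i) = ∑ i, y i :=
  gvi_same_aggregate_of_agg_strictly_monotone_general X Γ K hK hmono x y hx hy hgx hgy
end

section
/- Let x and y be two variational Nash equilibria of an I-player congestion game in which each c_t is β-strictly increasing, each u_i is concave, subgradients of c_t along feasible aggregates are bounded by C, and each X_i is contained in the ball of radius M/I. Then the aggregate profiles X = Σ_i x_i and Y = Σ_i y_i satisfy ‖X − Y‖ ≤ 2M √(TC/(βI)). -/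
open scoped RealInnerProductSpace BigOperators

noncomputable section

def subdiffR (f : ℝ → ℝ) (x : ℝ) : Set ℝ :=
  {a | ∀ y, f x + a * (y - x) ≤ f y}

/-- The set `H(x)` of joint subgradients for the atomic game. -/
def Hmap {I T : ℕ} (c : Fin T → ℝ → ℝ) (u : Fin I → EuclideanSpace ℝ (Fin T) → ℝ)
    (x : Fin I → EuclideanSpace ℝ (Fin T)) :
    Set (Fin I → EuclideanSpace ℝ (Fin T)) :=
  {g | ∀ i, ∃ a : Fin T → ℝ, (∀ t, a t ∈ subdiffR (c t) ((∑ j, x j) t)) ∧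
      ∃ gu ∈ subdiff (fun z => - u i z) (x i),
        g i = (cvec c (∑ j, x j) + (WithLp.equiv 2 (Fin T → ℝ)).symm (fun t => a t * x i t)) + gu}

/-- The set `H'(x)` of joint subgradients for the nonatomic game. -/
def Hmap' {I T : ℕ} (c : Fin T → ℝ → ℝ) (u : Fin I → EuclideanSpace ℝ (Fin T) → ℝ)
    (x : Fin I → EuclideanSpace ℝ (Fin T)) :
    Set (Fin I → EuclideanSpace ℝ (Fin T)) :=
  {g | ∀ i, ∃ gu ∈ subdiff (fun z => - u i z) (x i), g i = cvec c (∑ j, x j) + gu}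

/-- Variational Nash equilibrium on the coupled feasible set. -/
def isVNE {I T : ℕ} (X : Fin I → Set (EuclideanSpace ℝ (Fin T)))
    (A : Set (EuclideanSpace ℝ (Fin T))) (c : Fin T → ℝ → ℝ)
    (u : Fin I → EuclideanSpace ℝ (Fin T) → ℝ)
    (x : Fin I → EuclideanSpace ℝ (Fin T)) : Prop :=
  (∀ i, x i ∈ X i) ∧ (∑ i, x i) ∈ A ∧
    ∃ g ∈ Hmap c u x, ∀ z : Fin I → EuclideanSpace ℝ (Fin T),
      (∀ i, z i ∈ X i) → (∑ i, z i) ∈ A → 0 ≤ ∑ i, ⟪g i, z i - x i⟫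

/-- Symmetric variational Wardrop equilibrium on the coupled feasible set. -/
def isSVWE {I T : ℕ} (X : Fin I → Set (EuclideanSpace ℝ (Fin T)))
    (A : Set (EuclideanSpace ℝ (Fin T))) (c : Fin T → ℝ → ℝ)
    (u : Fin I → EuclideanSpace ℝ (Fin T) → ℝ)
    (x : Fin I → EuclideanSpace ℝ (Fin T)) : Prop :=
  (∀ i, x i ∈ X i) ∧ (∑ i, x i) ∈ A ∧
    ∃ g ∈ Hmap' c u x, ∀ z : Fin I → EuclideanSpace ℝ (Fin T),
      (∀ i, z i ∈ X i) → (∑ i, z i) ∈ A → 0 ≤ ∑ i, ⟪g i, z i - x i⟫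

/-!
Add the two variational inequalities, each tested at the other equilibrium. The difference of
the subgradients of player `i` splits into three parts: the common cost vector, which summed over
players contributes `-⟪c(X) - c(Y), X - Y⟫ ≤ -β‖X - Y‖²` by strict increase; the price-impact term
`(a_t x_{i,t})_t`, at most `4 C (M/I)²` in each of the `T` coordinates; and the utility
subgradients, which contribute a nonpositive amount because subdifferentials are monotone.
Hence `β‖X - Y‖² ≤ 4 T C M² / I`.
-/

lemma real_inner_euclideanSpace_eq_sum {ι : Type*} [Fintype ι] (v w : EuclideanSpace ℝ ι) :
    ⟪v, w⟫ = ∑ t, v t * w t := by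
  simp [EuclideanSpace.inner_eq_star_dotProduct, dotProduct, mul_comm]

lemma abs_apply_le_norm {ι : Type*} [Fintype ι] (v : EuclideanSpace ℝ ι) (t : ι) : |v t| ≤ ‖v‖ := by
  simpa only [Real.norm_eq_abs] using PiLp.norm_apply_le v t

lemma inner_sub_sub_nonpos_of_mem_subdiff {T : ℕ} {f : EuclideanSpace ℝ (Fin T) → ℝ}
    {p q gp gq : EuclideanSpace ℝ (Fin T)} (hp : gp ∈ subdiff f p) (hq : gq ∈ subdiff f q) :
    ⟪gp - gq, q - p⟫ ≤ 0 := by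
  have hpq := hp q
  have hqp := hq p
  rw [← neg_sub q p, inner_neg_right] at hqp
  rw [inner_sub_left]
  linarith

lemma mul_sub_mul_mul_sub_le {a b v w C m : ℝ} (ha : |a| ≤ C) (hb : |b| ≤ C) (hv : |v| ≤ m)
    (hw : |w| ≤ m) : (a * v - b * w) * (w - v) ≤ 4 * C * m ^ 2 := by
  have hC : 0 ≤ C := (abs_nonneg a).trans ha
  have hav : |a * v| ≤ C * m := by rw [abs_mul]; exact mul_le_mul ha hv (abs_nonneg v) hC
  have hbw : |b * w| ≤ C * m := by rw [abs_mul]; exact mul_le_mul hb hw (abs_nonneg w) hC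
  calc (a * v - b * w) * (w - v) ≤ |a * v - b * w| * |w - v| := by
        rw [← abs_mul]; exact le_abs_self _
    _ ≤ (C * m + C * m) * (m + m) :=
        mul_le_mul ((abs_sub _ _).trans (add_le_add hav hbw))
          ((abs_sub _ _).trans (add_le_add hw hv)) (abs_nonneg _)
          (add_nonneg ((abs_nonneg _).trans hav) ((abs_nonneg _).trans hbw))
    _ = 4 * C * m ^ 2 := by ring

lemma inner_coordMul_sub_le {ι : Type*} [Fintype ι] {a b : ι → ℝ} {v w : EuclideanSpace ℝ ι}
    {C m : ℝ} (ha : ∀ t, |a t| ≤ C) (hb : ∀ t, |b t| ≤ C) (hv : ‖v‖ ≤ m) (hw : ‖w‖ ≤ m) :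
    ⟪(WithLp.equiv 2 (ι → ℝ)).symm (fun t => a t * v t)
        - (WithLp.equiv 2 (ι → ℝ)).symm (fun t => b t * w t), w - v⟫
      ≤ Fintype.card ι * (4 * C * m ^ 2) := by
  rw [real_inner_euclideanSpace_eq_sum]
  calc _ ≤ ∑ _t : ι, 4 * C * m ^ 2 := Finset.sum_le_sum fun t _ => by
          simpa using mul_sub_mul_mul_sub_le (ha t) (hb t)
            ((abs_apply_le_norm v t).trans hv) ((abs_apply_le_norm w t).trans hw)
    _ = _ := by simp

lemma mul_norm_sub_sq_le_inner_cvec {T : ℕ} {c : Fin T → ℝ → ℝ} {β : ℝ}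
    (hstrict : ∀ t, ∀ a b : ℝ, β * (a - b) ^ 2 ≤ (c t a - c t b) * (a - b))
    (X Y : EuclideanSpace ℝ (Fin T)) :
    β * ‖X - Y‖ ^ 2 ≤ ⟪cvec c X - cvec c Y, X - Y⟫ := by
  rw [← real_inner_self_eq_norm_sq, real_inner_euclideanSpace_eq_sum,
    real_inner_euclideanSpace_eq_sum, Finset.mul_sum]
  exact Finset.sum_le_sum fun t _ => by simpa [cvec, ← sq] using hstrict t (X t) (Y t)

lemma exists_sum_inner_sub_nonneg_of_isVNE {I T : ℕ} {X : Fin I → Set (EuclideanSpace ℝ (Fin T))}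
    {A : Set (EuclideanSpace ℝ (Fin T))} {c : Fin T → ℝ → ℝ}
    {u : Fin I → EuclideanSpace ℝ (Fin T) → ℝ} {x y : Fin I → EuclideanSpace ℝ (Fin T)}
    (hx : isVNE X A c u x) (hy : isVNE X A c u y) :
    ∃ g ∈ Hmap c u x, ∃ h ∈ Hmap c u y, 0 ≤ ∑ i, ⟪g i - h i, y i - x i⟫ := by
  obtain ⟨hxX, hxA, g, hg, hgVI⟩ := hx
  obtain ⟨hyX, hyA, h, hh, hhVI⟩ := hy
  refine ⟨g, hg, h, hh, ?_⟩
  have hsplit : ∑ i, ⟪g i - h i, y i - x i⟫ = ∑ i, ⟪g i, y i - x i⟫ + ∑ i, ⟪h i, x i - y i⟫ := by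
    rw [← Finset.sum_add_distrib]
    refine Finset.sum_congr rfl fun i _ => ?_
    rw [inner_sub_left, ← neg_sub (y i) (x i), inner_neg_right]
    ring
  rw [hsplit]
  exact add_nonneg (hgVI y hyX hyA) (hhVI x hxX hxA)

lemma inner_sub_le_of_mem_Hmap {I T : ℕ} {c : Fin T → ℝ → ℝ}
    {u : Fin I → EuclideanSpace ℝ (Fin T) → ℝ} {x y g h : Fin I → EuclideanSpace ℝ (Fin T)}
    (hg : g ∈ Hmap c u x) (hh : h ∈ Hmap c u y) {C m : ℝ}
    (hCx : ∀ t, ∀ a ∈ subdiffR (c t) ((∑ j, x j) t), |a| ≤ C)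
    (hCy : ∀ t, ∀ a ∈ subdiffR (c t) ((∑ j, y j) t), |a| ≤ C)
    (i : Fin I) (hxi : ‖x i‖ ≤ m) (hyi : ‖y i‖ ≤ m) :
    ⟪g i - h i, y i - x i⟫
      ≤ ⟪cvec c (∑ j, x j) - cvec c (∑ j, y j), y i - x i⟫ + T * (4 * C * m ^ 2) := by
  obtain ⟨a, ha, gu, hgu, hgi⟩ := hg i
  obtain ⟨b, hb, gv, hgv, hhi⟩ := hh i
  have hcongestion := inner_coordMul_sub_le (fun t => hCx t _ (ha t)) (fun t => hCy t _ (hb t))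
    hxi hyi
  have hutility := inner_sub_sub_nonpos_of_mem_subdiff hgu hgv
  rw [Fintype.card_fin] at hcongestion
  rw [hgi, hhi, add_sub_add_comm, add_sub_add_comm, inner_add_left, inner_add_left]
  linarith

lemma le_two_mul_sqrt_of_mul_sq_le {d β M C I T : ℝ} (hd : 0 ≤ d) (hβ : 0 < β) (hI : I ≠ 0)
    (hM : 0 ≤ M) (h : β * d ^ 2 ≤ I * (T * (4 * C * (M / I) ^ 2))) :
    d ≤ 2 * M * √(T * C / (β * I)) := by
  have hsq : d ^ 2 ≤ (2 * M) ^ 2 * (T * C / (β * I)) := by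
    rw [show (2 * M) ^ 2 * (T * C / (β * I)) = I * (T * (4 * C * (M / I) ^ 2)) / β by
      field_simp; ring, le_div_iff₀ hβ]
    linarith
  calc d ≤ √((2 * M) ^ 2 * (T * C / (β * I))) :=
        (Real.le_sqrt hd (le_trans (sq_nonneg d) hsq)).mpr hsq
    _ = 2 * M * √(T * C / (β * I)) := by
        rw [Real.sqrt_mul (sq_nonneg _), Real.sqrt_sq (by positivity)]

theorem VNEs_close_aggregates_general {I T : ℕ} (hI : 0 < I)
    (X : Fin I → Set (EuclideanSpace ℝ (Fin T)))
    (A : Set (EuclideanSpace ℝ (Fin T)))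
    (c : Fin T → ℝ → ℝ)
    (β : ℝ) (hβ : 0 < β)
    (hstrict : ∀ t, ∀ a b : ℝ, β * (a - b) ^ 2 ≤ (c t a - c t b) * (a - b))
    (u : Fin I → EuclideanSpace ℝ (Fin T) → ℝ)
    (M C : ℝ)
    (hM : ∀ i, ∀ v ∈ X i, ‖v‖ ≤ M / I)
    (hC : ∀ z : Fin I → EuclideanSpace ℝ (Fin T), (∀ i, z i ∈ X i) →
      ∀ t, ∀ a ∈ subdiffR (c t) ((∑ i, z i) t), |a| ≤ C)
    (x y : Fin I → EuclideanSpace ℝ (Fin T))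
    (hx : isVNE X A c u x) (hy : isVNE X A c u y) :
    ‖(∑ i, x i) - (∑ i, y i)‖ ≤ 2 * M * Real.sqrt (T * C / (β * I)) := by
  obtain ⟨g, hg, h, hh, hVI⟩ := exists_sum_inner_sub_nonneg_of_isVNE hx hy
  have hplayer i := inner_sub_le_of_mem_Hmap hg hh (hC x hx.1) (hC y hy.1) i
    (hM i _ (hx.1 i)) (hM i _ (hy.1 i))
  have haggregate : ∑ i, ⟪cvec c (∑ j, x j) - cvec c (∑ j, y j), y i - x i⟫
      = -⟪cvec c (∑ j, x j) - cvec c (∑ j, y j), (∑ j, x j) - ∑ j, y j⟫ := by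
    rw [← inner_sum, Finset.sum_sub_distrib, ← neg_sub (∑ j, x j), inner_neg_right]
  have hkey : β * ‖(∑ i, x i) - ∑ i, y i‖ ^ 2 ≤ I * (T * (4 * C * (M / I) ^ 2)) := by
    have hsum := hVI.trans (Finset.sum_le_sum fun i _ => hplayer i)
    rw [Finset.sum_add_distrib, haggregate, Finset.sum_const, Finset.card_univ, Fintype.card_fin,
      nsmul_eq_mul] at hsum
    linarith [mul_norm_sub_sq_le_inner_cvec hstrict (∑ i, x i) (∑ i, y i)]
  have hI' : (0 : ℝ) < I := Nat.cast_pos.mpr hI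
  have hM0 : 0 ≤ M := by
    have h0 := mul_nonneg ((norm_nonneg _).trans (hM ⟨0, hI⟩ _ (hx.1 _))) hI'.le
    rwa [div_mul_cancel₀ M hI'.ne'] at h0
  exact le_two_mul_sqrt_of_mul_sq_le (norm_nonneg _) hβ hI'.ne' hM0 hkey

/-- Two VNEs of a large congestion game with strictly increasing costs have
close aggregates. -/
theorem VNEs_close_aggregates {I T : ℕ} (hI : 0 < I)
    (X : Fin I → Set (EuclideanSpace ℝ (Fin T)))
    (hXconv : ∀ i, Convex ℝ (X i)) (hXcpt : ∀ i, IsCompact (X i))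
    (A : Set (EuclideanSpace ℝ (Fin T))) (hAconv : Convex ℝ A) (hAcl : IsClosed A)
    (c : Fin T → ℝ → ℝ) (hcconv : ∀ t, ConvexOn ℝ Set.univ (c t))
    (hcmono : ∀ t, Monotone (c t)) (hccont : ∀ t, Continuous (c t))
    (β : ℝ) (hβ : 0 < β)
    (hstrict : ∀ t, ∀ a b : ℝ, β * (a - b) ^ 2 ≤ (c t a - c t b) * (a - b))
    (u : Fin I → EuclideanSpace ℝ (Fin T) → ℝ) (hucont : ∀ i, Continuous (u i))
    (hu : ∀ i, ConcaveOn ℝ Set.univ (u i))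
    (M C : ℝ)
    (hM : ∀ i, ∀ v ∈ X i, ‖v‖ ≤ M / I)
    (hC : ∀ z : Fin I → EuclideanSpace ℝ (Fin T), (∀ i, z i ∈ X i) →
      ∀ t, ∀ a ∈ subdiffR (c t) ((∑ i, z i) t), |a| ≤ C)
    (x y : Fin I → EuclideanSpace ℝ (Fin T))
    (hx : isVNE X A c u x) (hy : isVNE X A c u y) :
    ‖(∑ i, x i) - (∑ i, y i)‖ ≤ 2 * M * Real.sqrt (T * C / (β * I)) :=
  VNEs_close_aggregates_general hI X A c β hβ hstrict u M C hM hC x y hx hy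
end
end

section
/- Let x ∈ F(A) be a variational Nash equilibrium (solution of the GVI with subgradient map H including the terms (a_{i,t} x_{i,t})_t) and x* ∈ F(A) a symmetric variational Wardrop equilibrium (solution of the GVI with the map H' omitting those terms). If each u_i is α-strongly concave, then ‖x − x*‖ ≤ M √(2TC/(αI)); if instead each c_t is β-strictly increasing, then the aggregates satisfy ‖Σ_i x_i − Σ_i x*_i‖ ≤ M √(2TC/(βI)). -/
open scoped RealInnerProductSpace BigOperators

noncomputable section

/-!
Add the VNE inequality tested at `xs` to the SVWE inequality tested at `x`, and write `S`, `S'`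
for the aggregates `∑ i, x i`, `∑ i, xs i`. The common cost terms leave the monotonicity gap
`⟪cvec c S - cvec c S', S - S'⟫` of the costs, the utility terms leave
`∑ i, ⟪gu i - gu' i, x i - xs i⟫`, and their sum is bounded by the atomic correction
`∑ i, ∑ t, a i t * x i t * (xs i t - x i t)`, which is at most `2 T C M² / I` because
`|a i t| ≤ C` and every strategy has norm at most `M / I`. Strong concavity of the utilities
(resp. strong monotonicity of the costs) bounds the second (resp. first) gap from below by
`α ∑ i, ‖x i - xs i‖²` (resp. `β ‖S - S'‖²`), while the other gap is nonnegative.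
-/

open Filter Topology Finset

section Subdifferential

variable {T : ℕ} {f : EuclideanSpace ℝ (Fin T) → ℝ} {x y g h : EuclideanSpace ℝ (Fin T)}

lemma inner_sub_sub_nonneg_of_mem_subdiff (hg : g ∈ subdiff f x) (hh : h ∈ subdiff f y) :
    0 ≤ ⟪g - h, x - y⟫ := by
  have hgy := hg y
  have hhx := hh x
  rw [← neg_sub x y, inner_neg_right] at hgy
  rw [inner_sub_left]
  linarith

/- Only the limit `s → 0⁺` of the chord inequality along `(1 - s) • x + s • y` yields the full
constant `α / 2`; any fixed `s` loses a factor `1 - s`. -/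
lemma add_inner_add_le_of_mem_subdiff {α : ℝ} (hf : StrongConvexOn Set.univ α f)
    (hg : g ∈ subdiff f x) (y : EuclideanSpace ℝ (Fin T)) :
    f x + ⟪g, y - x⟫ + α / 2 * ‖x - y‖ ^ 2 ≤ f y := by
  set K := α / 2 * ‖x - y‖ ^ 2
  have hchord : ∀ s ∈ Set.Ioo (0 : ℝ) 1, f x + ⟪g, y - x⟫ + (1 - s) * K ≤ f y := by
    rintro s ⟨hs0, hs1⟩
    have hconv := hf.2 (Set.mem_univ x) (Set.mem_univ y) (sub_nonneg.2 hs1.le) hs0.le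
      (sub_add_cancel 1 s)
    have hsub := hg ((1 - s) • x + s • y)
    rw [show (1 - s) • x + s • y - x = s • (y - x) by module, inner_smul_right] at hsub
    simp only [smul_eq_mul] at hconv
    refine le_of_mul_le_mul_left ?_ hs0
    linear_combination hsub + hconv
  have hlim : Tendsto (fun s : ℝ => f x + ⟪g, y - x⟫ + (1 - s) * K) (𝓝[>] 0)
      (𝓝 (f x + ⟪g, y - x⟫ + K)) := by
    have hcont : Continuous fun s : ℝ => f x + ⟪g, y - x⟫ + (1 - s) * K := by fun_prop
    simpa using tendsto_nhdsWithin_of_tendsto_nhds (hcont.tendsto 0)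
  exact le_of_tendsto hlim (eventually_of_mem (Ioo_mem_nhdsGT one_pos) hchord)

lemma mul_norm_sq_le_inner_sub_sub_of_mem_subdiff {α : ℝ} (hf : StrongConvexOn Set.univ α f)
    (hg : g ∈ subdiff f x) (hh : h ∈ subdiff f y) :
    α * ‖x - y‖ ^ 2 ≤ ⟪g - h, x - y⟫ := by
  have hgy := add_inner_add_le_of_mem_subdiff hf hg y
  have hhx := add_inner_add_le_of_mem_subdiff hf hh x
  rw [← neg_sub x y, inner_neg_right] at hgy
  rw [norm_sub_rev] at hhx
  rw [inner_sub_left]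
  linarith

end Subdifferential

section Cost

variable {T : ℕ} (c : Fin T → ℝ → ℝ)

lemma inner_cvec_sub_cvec (X Y : EuclideanSpace ℝ (Fin T)) :
    ⟪cvec c X - cvec c Y, X - Y⟫ = ∑ t, (c t (X t) - c t (Y t)) * (X t - Y t) := by
  simp [PiLp.inner_apply, cvec, mul_comm]

variable {c}

lemma mul_norm_sq_le_inner_cvec_sub_cvec {β : ℝ}
    (hc : ∀ t, ∀ a b : ℝ, β * (a - b) ^ 2 ≤ (c t a - c t b) * (a - b))
    (X Y : EuclideanSpace ℝ (Fin T)) :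
    β * ‖X - Y‖ ^ 2 ≤ ⟪cvec c X - cvec c Y, X - Y⟫ := by
  rw [inner_cvec_sub_cvec, EuclideanSpace.norm_sq_eq, mul_sum]
  exact sum_le_sum fun t _ => by simpa using hc t (X t) (Y t)

lemma inner_cvec_sub_cvec_nonneg (hc : ∀ t, Monotone (c t)) (X Y : EuclideanSpace ℝ (Fin T)) :
    0 ≤ ⟪cvec c X - cvec c Y, X - Y⟫ := by
  simpa using mul_norm_sq_le_inner_cvec_sub_cvec (β := 0) (c := c)
    (fun t a b => by simpa using ((hc t).monovary monotone_id).sub_mul_sub_nonneg b a) X Y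

end Cost

lemma sum_sum_mul_mul_sub_le {I T : ℕ} {C R : ℝ} (a : Fin I → Fin T → ℝ)
    (x y : Fin I → EuclideanSpace ℝ (Fin T)) (ha : ∀ i t, |a i t| ≤ C)
    (hx : ∀ i, ‖x i‖ ≤ R) (hy : ∀ i, ‖y i‖ ≤ R) :
    ∑ i, ∑ t, a i t * x i t * (y i t - x i t) ≤ I * (T * (C * R * (2 * R))) := by
  have hterm : ∀ i t, a i t * x i t * (y i t - x i t) ≤ C * R * (2 * R) := by
    intro i t
    have hxt : |x i t| ≤ R := (PiLp.norm_apply_le (x i) t).trans (hx i)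
    have hdt : |y i t - x i t| ≤ 2 * R := by
      have hyt : |y i t| ≤ R := (PiLp.norm_apply_le (y i) t).trans (hy i)
      linarith [abs_sub (y i t) (x i t)]
    calc a i t * x i t * (y i t - x i t) ≤ |a i t| * |x i t| * |y i t - x i t| := by
          rw [← abs_mul, ← abs_mul]; exact le_abs_self _
      _ ≤ C * R * (2 * R) := by
          have hC : 0 ≤ C := (abs_nonneg _).trans (ha i t)
          have hR : 0 ≤ R := (abs_nonneg _).trans hxt
          exact mul_le_mul (mul_le_mul (ha i t) hxt (abs_nonneg _) hC) hdt (abs_nonneg _)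
            (mul_nonneg hC hR)
  calc ∑ i, ∑ t, a i t * x i t * (y i t - x i t) ≤ ∑ _i : Fin I, T * (C * R * (2 * R)) := by
        refine sum_le_sum fun i _ => ?_
        simpa using sum_le_card_nsmul univ _ _ fun t _ => hterm i t
    _ = I * (T * (C * R * (2 * R))) := by simp

lemma isVNE.exists_inner_cvec_add_sum_inner_le {I T : ℕ}
    {X : Fin I → Set (EuclideanSpace ℝ (Fin T))} {A : Set (EuclideanSpace ℝ (Fin T))}
    {c : Fin T → ℝ → ℝ} {u : Fin I → EuclideanSpace ℝ (Fin T) → ℝ}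
    {x xs : Fin I → EuclideanSpace ℝ (Fin T)}
    (hx : isVNE X A c u x) (hxs : isSVWE X A c u xs) :
    ∃ (a : Fin I → Fin T → ℝ) (gu gu' : Fin I → EuclideanSpace ℝ (Fin T)),
      (∀ i t, a i t ∈ subdiffR (c t) ((∑ j, x j) t)) ∧
      (∀ i, gu i ∈ subdiff (fun z => - u i z) (x i)) ∧
      (∀ i, gu' i ∈ subdiff (fun z => - u i z) (xs i)) ∧
      ⟪cvec c (∑ i, x i) - cvec c (∑ i, xs i), (∑ i, x i) - ∑ i, xs i⟫
        + ∑ i, ⟪gu i - gu' i, x i - xs i⟫ ≤ ∑ i, ∑ t, a i t * x i t * (xs i t - x i t) := by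
  obtain ⟨hxX, hxA, g, hg, hvi⟩ := hx
  obtain ⟨hxsX, hxsA, g', hg', hvi'⟩ := hxs
  choose a ha gu hgu hg using hg
  choose gu' hgu' hg' using hg'
  refine ⟨a, gu, gu', ha, hgu, hgu', ?_⟩
  have hterm : ∀ i, ⟪g i, xs i - x i⟫ + ⟪g' i, x i - xs i⟫
      = ∑ t, a i t * x i t * (xs i t - x i t)
        - ⟪cvec c (∑ i, x i) - cvec c (∑ i, xs i), x i - xs i⟫ - ⟪gu i - gu' i, x i - xs i⟫ := by
    intro i
    have hcorr : ⟪(WithLp.equiv 2 (Fin T → ℝ)).symm (fun t => a i t * x i t), xs i - x i⟫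
        = ∑ t, a i t * x i t * (xs i t - x i t) := by
      simp [PiLp.inner_apply, mul_comm]
    rw [hg i, hg' i, ← hcorr]
    simp only [inner_add_left, inner_sub_left, inner_sub_right]
    ring
  have hsum := add_nonneg (hvi xs hxsX hxsA) (hvi' x hxX hxA)
  rw [← sum_add_distrib, sum_congr rfl fun i _ => hterm i, sum_sub_distrib, sum_sub_distrib,
    ← inner_sum, sum_sub_distrib] at hsum
  linarith

lemma sqrt_le_mul_sqrt_of_mul_le {α s M C I T : ℝ} (hα : 0 < α) (hM : 0 ≤ M) (hI : 0 < I)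
    (h : α * s ≤ I * (T * (C * (M / I) * (2 * (M / I))))) :
    √s ≤ M * √(2 * T * C / (α * I)) := by
  have hs : s ≤ M ^ 2 * (2 * T * C / (α * I)) := by
    refine le_of_mul_le_mul_left (h.trans_eq ?_) hα
    field_simp
  calc √s ≤ √(M ^ 2 * (2 * T * C / (α * I))) := Real.sqrt_le_sqrt hs
    _ = M * √(2 * T * C / (α * I)) := by rw [Real.sqrt_mul (sq_nonneg M), Real.sqrt_sq hM]

theorem SVWE_close_to_VNE_general {I T : ℕ} (hI : 0 < I)
    (X : Fin I → Set (EuclideanSpace ℝ (Fin T)))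
    (A : Set (EuclideanSpace ℝ (Fin T)))
    (c : Fin T → ℝ → ℝ)
    (hcmono : ∀ t, Monotone (c t))
    (u : Fin I → EuclideanSpace ℝ (Fin T) → ℝ)
    (M C : ℝ)
    (hM : ∀ i, ∀ v ∈ X i, ‖v‖ ≤ M / I)
    (hC : ∀ z : Fin I → EuclideanSpace ℝ (Fin T), (∀ i, z i ∈ X i) →
      ∀ t, ∀ a ∈ subdiffR (c t) ((∑ i, z i) t), |a| ≤ C)
    (x xs : Fin I → EuclideanSpace ℝ (Fin T))
    (hx : isVNE X A c u x) (hxs : isSVWE X A c u xs) :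
    (∀ α : ℝ, 0 < α →
      (∀ i, ConvexOn ℝ Set.univ (fun z => - u i z - (α / 2) * ‖z‖ ^ 2)) →
      Real.sqrt (∑ i, ‖x i - xs i‖ ^ 2) ≤ M * Real.sqrt (2 * T * C / (α * I))) ∧
    (∀ β : ℝ, 0 < β →
      (∀ t, ∀ a b : ℝ, β * (a - b) ^ 2 ≤ (c t a - c t b) * (a - b)) →
      ‖(∑ i, x i) - (∑ i, xs i)‖ ≤ M * Real.sqrt (2 * T * C / (β * I))) := by
  have hIpos : (0 : ℝ) < I := Nat.cast_pos.2 hI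
  have hM0 : 0 ≤ M := by
    have := (norm_nonneg _).trans (hM ⟨0, hI⟩ _ (hx.1 ⟨0, hI⟩))
    rwa [le_div_iff₀ hIpos, zero_mul] at this
  obtain ⟨a, gu, gu', ha, hgu, hgu', hgap⟩ := hx.exists_inner_cvec_add_sum_inner_le hxs
  have hcorr := sum_sum_mul_mul_sub_le a x xs (fun i t => hC x hx.1 t _ (ha i t))
    (fun i => hM i _ (hx.1 i)) (fun i => hM i _ (hxs.1 i))
  refine ⟨fun α hα hstrong => ?_, fun β hβ hcβ => ?_⟩
  · have hutil : α * ∑ i, ‖x i - xs i‖ ^ 2 ≤ ∑ i, ⟪gu i - gu' i, x i - xs i⟫ := by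
      rw [mul_sum]
      exact sum_le_sum fun i _ => mul_norm_sq_le_inner_sub_sub_of_mem_subdiff
        (strongConvexOn_iff_convex.2 (hstrong i)) (hgu i) (hgu' i)
    have hcost := inner_cvec_sub_cvec_nonneg hcmono (∑ i, x i) (∑ i, xs i)
    exact sqrt_le_mul_sqrt_of_mul_le hα hM0 hIpos (by linarith)
  · have hutil : 0 ≤ ∑ i, ⟪gu i - gu' i, x i - xs i⟫ :=
      sum_nonneg fun i _ => inner_sub_sub_nonneg_of_mem_subdiff (hgu i) (hgu' i)
    have hcost := mul_norm_sq_le_inner_cvec_sub_cvec hcβ (∑ i, x i) (∑ i, xs i)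
    rw [← Real.sqrt_sq (norm_nonneg _)]
    exact sqrt_le_mul_sqrt_of_mul_le hβ hM0 hIpos (by linarith)

/-- The SVWE is close to any VNE: in individual strategies under strong concavity
of the utilities, and in aggregates under strict increase of the costs. -/
theorem SVWE_close_to_VNE {I T : ℕ} (hI : 0 < I)
    (X : Fin I → Set (EuclideanSpace ℝ (Fin T)))
    (hXconv : ∀ i, Convex ℝ (X i)) (hXcpt : ∀ i, IsCompact (X i))
    (A : Set (EuclideanSpace ℝ (Fin T))) (hAconv : Convex ℝ A) (hAcl : IsClosed A)
    (c : Fin T → ℝ → ℝ) (hcconv : ∀ t, ConvexOn ℝ Set.univ (c t))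
    (hcmono : ∀ t, Monotone (c t)) (hccont : ∀ t, Continuous (c t))
    (u : Fin I → EuclideanSpace ℝ (Fin T) → ℝ) (hucont : ∀ i, Continuous (u i))
    (hu : ∀ i, ConcaveOn ℝ Set.univ (u i))
    (M C : ℝ)
    (hM : ∀ i, ∀ v ∈ X i, ‖v‖ ≤ M / I)
    (hC : ∀ z : Fin I → EuclideanSpace ℝ (Fin T), (∀ i, z i ∈ X i) →
      ∀ t, ∀ a ∈ subdiffR (c t) ((∑ i, z i) t), |a| ≤ C)
    (x xs : Fin I → EuclideanSpace ℝ (Fin T))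
    (hx : isVNE X A c u x) (hxs : isSVWE X A c u xs) :
    (∀ α : ℝ, 0 < α →
      (∀ i, ConvexOn ℝ Set.univ (fun z => - u i z - (α / 2) * ‖z‖ ^ 2)) →
      Real.sqrt (∑ i, ‖x i - xs i‖ ^ 2) ≤ M * Real.sqrt (2 * T * C / (α * I))) ∧
    (∀ β : ℝ, 0 < β →
      (∀ t, ∀ a b : ℝ, β * (a - b) ^ 2 ≤ (c t a - c t b) * (a - b)) →
      ‖(∑ i, x i) - (∑ i, xs i)‖ ≤ M * Real.sqrt (2 * T * C / (β * I))) :=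
  SVWE_close_to_VNE_general hI X A c hcmono u M C hM hC x xs hx hxs
end
end

section
/- Let X_i, X_n ⊂ R^T be convex compact sets with Hausdorff distance d_H(X_i, X_n) ≤ δ, and suppose the affine hull of X_i is contained in the affine hull of X_n. If x ∈ X_n satisfies d(x, rbd X_n) > δ (distance to the relative boundary of X_n), then x ∈ X_i. -/
open Metric Set AffineMap
open scoped InnerProductSpace

/-!
Suppose `x ∉ Xi` and let `p` be the nearest point of `Xi` to `x`. Pushing `x` a further
distance `δ` away from `p` gives a point `z` still in the affine hull of `Xn`; as `x` is more
than `δ` away from the relative boundary, `z ∈ Xn`. But the obtuse-angle characterization of `p`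
puts `z` at distance `dist x p + δ > δ` from `Xi`, contradicting `d_H(Xi, Xn) ≤ δ`.
-/

section IntrinsicFrontier

variable {V P : Type*} [SeminormedAddCommGroup V] [NormedSpace ℝ V] [PseudoMetricSpace P]
  [NormedAddTorsor V P]

/-- A segment in the affine span of `s` that starts in `s` and leaves `s` crosses the
intrinsic frontier of `s`, since `[0, 1]` is connected. -/
theorem mem_of_dist_lt_infDist_intrinsicFrontier {s : Set P} {x y : P} (hx : x ∈ s)
    (hy : y ∈ affineSpan ℝ s) (hxy : dist x y < infDist x (intrinsicFrontier ℝ s)) :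
    y ∈ s := by
  by_contra hys
  let g : unitInterval → affineSpan ℝ s := fun t =>
    ⟨lineMap x y (t : ℝ), lineMap_mem _ (subset_affineSpan ℝ s hx) hy⟩
  have hg : Continuous g := (lineMap_continuous.comp continuous_subtype_val).subtype_mk _
  let S : Set unitInterval := g ⁻¹' ((↑) ⁻¹' s)
  have hstart : 0 ∈ S := by simpa [S, g] using hx
  have hend : 1 ∉ S := by simpa [S, g] using hys
  obtain ⟨t, ht⟩ :=
    nonempty_frontier_iff.2 ⟨⟨0, hstart⟩, (ne_univ_iff_exists_notMem S).2 ⟨1, hend⟩⟩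
  have hfront : (g t : P) ∈ intrinsicFrontier ℝ s := ⟨g t, hg.frontier_preimage_subset _ ht, rfl⟩
  have hclose : dist x (g t) ≤ dist x y := by
    rw [dist_comm, dist_lineMap_left, Real.norm_of_nonneg t.2.1]
    exact mul_le_of_le_one_left dist_nonneg t.2.2
  exact ((infDist_le_dist_of_mem hfront).trans hclose).not_gt hxy

end IntrinsicFrontier

section Projection

variable {F : Type*} [NormedAddCommGroup F] [InnerProductSpace ℝ F]

theorem exists_mem_forall_inner_sub_le_zero {K : Set F} (hne : K.Nonempty) (hK : IsComplete K)
    (hconv : Convex ℝ K) (x : F) : ∃ p ∈ K, ∀ y ∈ K, ⟪x - p, y - p⟫_ℝ ≤ 0 :=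
  let ⟨p, hp, hmin⟩ := exists_norm_eq_iInf_of_complete_convex hne hK hconv x
  ⟨p, hp, (norm_eq_iInf_iff_real_inner_le_zero hconv hp).1 hmin⟩

theorem mul_dist_le_dist_lineMap_of_inner_le_zero {x p y : F} (h : ⟪x - p, y - p⟫_ℝ ≤ 0)
    (s : ℝ) : s * dist x p ≤ dist (lineMap p x s) y := by
  set u := x - p
  have hinner : s * (‖u‖ * ‖u‖) ≤ ⟪lineMap p x s - y, u⟫_ℝ := by
    have : lineMap p x s - y = s • u - (y - p) := by
      rw [lineMap_apply, vsub_eq_sub, vadd_eq_add]; abel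
    rw [this, inner_sub_left, real_inner_smul_left, real_inner_self_eq_norm_mul_norm,
      real_inner_comm]
    linarith
  have hcs := real_inner_le_norm (lineMap p x s - y) u
  rw [dist_eq_norm x p, dist_eq_norm]
  rcases (norm_nonneg u).eq_or_lt with hu | hu
  · rw [← hu, mul_zero]; exact norm_nonneg _
  · exact le_of_mul_le_mul_right (by linarith) hu

theorem exists_lineMap_dist_eq_lt_infDist {K : Set F} (hne : K.Nonempty) (hK : IsComplete K)
    (hconv : Convex ℝ K) {x : F} (hx : x ∉ K) {δ : ℝ} (hδ : 0 ≤ δ) :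
    ∃ p ∈ K, ∃ s : ℝ, dist x (lineMap p x s) = δ ∧ δ < infDist (lineMap p x s) K := by
  obtain ⟨p, hp, hproj⟩ := exists_mem_forall_inner_sub_le_zero hne hK hconv x
  have hxp : 0 < dist x p := dist_pos.2 (ne_of_mem_of_not_mem hp hx).symm
  refine ⟨p, hp, 1 + δ / dist x p, ?_, ?_⟩
  · rw [dist_comm, dist_lineMap_right, dist_comm p x, sub_add_cancel_left, norm_neg,
      Real.norm_of_nonneg (div_nonneg hδ hxp.le), div_mul_cancel₀ _ hxp.ne']
  · refine lt_of_lt_of_le ?_ ((le_infDist hne).2 fun y hy =>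
      mul_dist_le_dist_lineMap_of_inner_le_zero (hproj y hy) _)
    rw [add_mul, one_mul, div_mul_cancel₀ _ hxp.ne']
    linarith

end Projection

theorem mem_of_far_from_relative_boundary_general {T : ℕ}
    (Xi Xn : Set (EuclideanSpace ℝ (Fin T)))
    (hXi : Convex ℝ Xi) (hXicpt : IsCompact Xi) (hXine : Xi.Nonempty)
    (hXncpt : IsCompact Xn)
    (δ : ℝ) (hd : Metric.hausdorffDist Xi Xn ≤ δ)
    (haff : affineSpan ℝ Xi ≤ affineSpan ℝ Xn)
    (x : EuclideanSpace ℝ (Fin T)) (hx : x ∈ Xn)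
    (hfar : δ < Metric.infDist x (intrinsicFrontier ℝ Xn)) :
    x ∈ Xi := by
  by_contra hxi
  obtain ⟨p, hp, s, hdist, hzfar⟩ := exists_lineMap_dist_eq_lt_infDist hXine
    hXicpt.isComplete hXi hxi (hausdorffDist_nonneg.trans hd)
  have hz : lineMap p x s ∈ Xn := mem_of_dist_lt_infDist_intrinsicFrontier hx
    (lineMap_mem s (haff (subset_affineSpan ℝ Xi hp)) (subset_affineSpan ℝ Xn hx))
    (hdist ▸ hfar)
  have hzclose : infDist (lineMap p x s) Xi ≤ hausdorffDist Xn Xi :=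
    infDist_le_hausdorffDist_of_mem hz <| hausdorffEDist_ne_top_of_nonempty_of_bounded
      ⟨x, hx⟩ hXine hXncpt.isBounded hXicpt.isBounded
  rw [hausdorffDist_comm] at hzclose
  linarith

/-- If `d_H(X_i, X_n) ≤ δ`, `aff X_i ⊆ aff X_n`, and `x ∈ X_n` is at distance
more than `δ` from the relative boundary of `X_n`, then `x ∈ X_i`. -/
theorem mem_of_far_from_relative_boundary {T : ℕ}
    (Xi Xn : Set (EuclideanSpace ℝ (Fin T)))
    (hXi : Convex ℝ Xi) (hXicpt : IsCompact Xi) (hXine : Xi.Nonempty)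
    (hXn : Convex ℝ Xn) (hXncpt : IsCompact Xn) (hXnne : Xn.Nonempty)
    (δ : ℝ) (hd : Metric.hausdorffDist Xi Xn ≤ δ)
    (haff : affineSpan ℝ Xi ≤ affineSpan ℝ Xn)
    (x : EuclideanSpace ℝ (Fin T)) (hx : x ∈ Xn)
    (hfar : δ < Metric.infDist x (intrinsicFrontier ℝ Xn)) :
    x ∈ Xi :=
  mem_of_far_from_relative_boundary_general Xi Xn hXi hXicpt hXine hXncpt δ hd haff x hx hfar
end
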